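/- If σ is completely erasing and verifies the optimality condition, then for every n ∈ ℕ there exists a finite binary word w with vanishing order ε(w) = n (the least m with σ^m(w) = ε equals exactly n). -/

import Mathlib

/-- The alternating extension of a block substitution given by simple
substitutions `s i : Bool -> List Bool` applied to the digit in position `i` mod `k`. -/
def altApply (k : Nat) (s : Nat -> Bool -> List Bool) (w : List Bool) : List Bool :=
  (w.zipIdx.map fun p => s (p.2 % k) p.1).flatten

/-- The length-`m` prefix of an infinite binary word. -/
def prefixOf (u : Nat -> Bool) (m : Nat) : List Bool := List.ofFn fun i : Fin m => u i

/-- Concatenation of the first `m` words of a sequence of finite words. -/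
def concatPre (v : Nat -> List Bool) (m : Nat) : List Bool :=
  (List.ofFn fun i : Fin m => v i).flatten

/-- The optimality condition: every infinite binary word is an infinite
concatenation of nonempty images of length-`k` blocks under `sigma`. -/
def OC (k : Nat) (sigma : List Bool -> List Bool) : Prop :=
  ∀ w : Nat -> Bool, ∃ u : Nat -> List Bool,
    (∀ i, (u i).length = k ∧ sigma (u i) ≠ []) ∧
    ∀ m, concatPre (fun i => sigma (u i)) m
        = prefixOf w (concatPre (fun i => sigma (u i)) m).length


/-!
By the optimality condition every finite word is a prefix of the image of some word, and `σ`
respects prefixes; hence by induction there are words surviving any number of iterations.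
Complete erasure gives each word `w` a first time `N` with `σ^N(w) = ε`; if `w` survives `n - 1`
iterations then `N ≥ n`, and `σ^(N - n)(w)` has vanishing order exactly `n`.
-/

theorem Function.exists_iterate_eq_and_forall_lt_ne {α : Type*} {f : α → α} {z : α}
    (hreach : ∀ x, ∃ N, f^[N] x = z) {n : ℕ} (hsurvive : ∃ w, ∀ m < n, f^[m] w ≠ z) :
    ∃ w, f^[n] w = z ∧ ∀ m < n, f^[m] w ≠ z := by
  classical
  obtain ⟨w, hw⟩ := hsurvive
  let N := Nat.find (hreach w)
  have hnN : n ≤ N := not_lt.mp fun h => hw N h (Nat.find_spec (hreach w))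
  refine ⟨f^[N - n] w, ?_, fun m hm => ?_⟩
  · rw [← Function.iterate_add_apply, Nat.add_sub_cancel' hnN]
    exact Nat.find_spec (hreach w)
  · rw [← Function.iterate_add_apply]
    exact Nat.find_min (hreach w) (by omega)

theorem Function.iterate_ne_of_le {α : Type*} {f : α → α} {z w : α} (hz : f z = z) {m n : ℕ}
    (hmn : m ≤ n) (hw : f^[n] w ≠ z) : f^[m] w ≠ z := fun h =>
  hw <| by rw [← Nat.sub_add_cancel hmn, Function.iterate_add_apply, h, Function.iterate_fixed hz]

theorem List.iterate_isPrefix {α : Type*} {f : List α → List α}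
    (hf : ∀ {a b : List α}, a <+: b → f a <+: f b) (n : ℕ) {a b : List α} (h : a <+: b) :
    f^[n] a <+: f^[n] b := by
  induction n generalizing a b with
  | zero => exact h
  | succ n ih => exact ih (hf h)

theorem List.exists_iterate_ne_nil {α : Type*} [Inhabited α] {f : List α → List α}
    (hf : ∀ {a b : List α}, a <+: b → f a <+: f b) (hcover : ∀ w, ∃ v, w <+: f v) :
    ∀ n, ∃ w, f^[n] w ≠ [] := by
  intro n
  induction n with
  | zero => exact ⟨[default], List.cons_ne_nil _ _⟩
  | succ n ih =>
    obtain ⟨w, hw⟩ := ih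
    obtain ⟨v, hwv⟩ := hcover w
    exact ⟨v, fun h => hw <| List.prefix_nil.mp (h ▸ List.iterate_isPrefix hf n hwv)⟩

section altApply

variable (k : ℕ) (s : ℕ → Bool → List Bool)

theorem altApply_nil : altApply k s [] = [] := by
  simp [altApply]

theorem map_zipIdx_congr_mod (b : List Bool) {i j : ℕ} (h : i % k = j % k) :
    (b.zipIdx i).map (fun p => s (p.2 % k) p.1) = (b.zipIdx j).map (fun p => s (p.2 % k) p.1) := by
  induction b generalizing i j with
  | nil => simp
  | cons x b ih =>
    simp only [List.zipIdx_cons, List.map_cons, h]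
    rw [ih (i := i + 1) (j := j + 1) (by rw [Nat.add_mod, h, ← Nat.add_mod])]

theorem altApply_append_of_mod_eq_zero {a : List Bool} (h : a.length % k = 0) (b : List Bool) :
    altApply k s (a ++ b) = altApply k s a ++ altApply k s b := by
  unfold altApply
  rw [List.zipIdx_append, List.map_append, List.flatten_append,
    map_zipIdx_congr_mod k s b (j := 0) (by simp [h])]

theorem altApply_isPrefix {a b : List Bool} (h : a <+: b) : altApply k s a <+: altApply k s b := by
  obtain ⟨c, rfl⟩ := h
  unfold altApply
  rw [List.zipIdx_append, List.map_append, List.flatten_append]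
  exact List.prefix_append _ _

end altApply

theorem concatPre_succ (v : ℕ → List Bool) (m : ℕ) :
    concatPre v (m + 1) = concatPre v m ++ v m := by
  rw [concatPre, concatPre, List.ofFn_succ']
  simp

theorem le_length_concatPre {v : ℕ → List Bool} (hv : ∀ i, v i ≠ []) (m : ℕ) :
    m ≤ (concatPre v m).length := by
  induction m with
  | zero => simp
  | succ m ih =>
    rw [concatPre_succ, List.length_append]
    have := List.length_pos_iff.2 (hv m)
    omega

theorem length_concatPre {k : ℕ} {v : ℕ → List Bool} (hv : ∀ i, (v i).length = k) (m : ℕ) :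
    (concatPre v m).length = m * k := by
  induction m with
  | zero => simp [concatPre]
  | succ m ih => rw [concatPre_succ, List.length_append, ih, hv]; ring

theorem altApply_concatPre (k : ℕ) (s : ℕ → Bool → List Bool) {u : ℕ → List Bool}
    (hu : ∀ i, (u i).length = k) (m : ℕ) :
    altApply k s (concatPre u m) = concatPre (fun i => altApply k s (u i)) m := by
  induction m with
  | zero => simp [concatPre, altApply_nil]
  | succ m ih =>
    rw [concatPre_succ, concatPre_succ, altApply_append_of_mod_eq_zero k s
      (by rw [length_concatPre hu, Nat.mul_mod_left]), ih]

theorem prefixOf_isPrefix_of_le (f : ℕ → Bool) {m n : ℕ} (h : m ≤ n) :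
    prefixOf f m <+: prefixOf f n := by
  have : prefixOf f m = (prefixOf f n).take m :=
    List.ext_getElem (by simp [prefixOf]; omega) fun i _ _ => by simp [prefixOf]
  exact this ▸ List.take_prefix _ _

theorem prefixOf_getD (w : List Bool) : prefixOf (fun i => w.getD i false) w.length = w :=
  List.ext_getElem (by simp [prefixOf]) fun i _ h => by
    simp only [prefixOf, List.getElem_ofFn]
    exact w.getD_eq_getElem false h

/-- Extend `w` to an infinite word and cut its `OC`-factorisation after `|w|` blocks: the image
of these blocks is a prefix of the extension of length at least `|w|`. -/
theorem OC.exists_isPrefix_altApply {k : ℕ} {s : ℕ → Bool → List Bool}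
    (hOC : OC k (altApply k s)) (w : List Bool) : ∃ v, w <+: altApply k s v := by
  obtain ⟨u, hu, hfactor⟩ := hOC (fun i => w.getD i false)
  refine ⟨concatPre u w.length, ?_⟩
  rw [altApply_concatPre k s (fun i => (hu i).1), hfactor]
  conv_lhs => rw [← prefixOf_getD w]
  exact prefixOf_isPrefix_of_le _ (le_length_concatPre (fun i => (hu i).2) _)

theorem every_vanishing_order_attained_general
    (k : Nat) (s : Nat -> Bool -> List Bool)
    (hCE : ∀ w : List Bool, ∃ n : Nat, (altApply k s)^[n] w = [])
    (hOC : OC k (altApply k s)) :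
    ∀ n : Nat, 0 < n → ∃ w : List Bool,
      (altApply k s)^[n] w = [] ∧ ∀ m < n, (altApply k s)^[m] w ≠ [] := by
  intro n hn
  obtain ⟨w, hw⟩ := List.exists_iterate_ne_nil (altApply_isPrefix k s) hOC.exists_isPrefix_altApply
    (n - 1)
  exact Function.exists_iterate_eq_and_forall_lt_ne hCE
    ⟨w, fun m hm => Function.iterate_ne_of_le (altApply_nil k s) (by omega) hw⟩

/-- if the alternating substitution (given by `s`) is completely
erasing and satisfies the optimality condition, then every positive integer is
attained as a vanishing order: for each `n ≥ 1` there is a finite word `w`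
erased by exactly `n` iterations. -/
theorem every_vanishing_order_attained
    (k : Nat) (s : Nat -> Bool -> List Bool) (weps : List Bool)
    (hk : 2 ≤ k) (hlen : weps.length = k)
    (hne1 : weps ≠ List.replicate k true)
    (herase : ∀ w : List Bool, w.length = k → (altApply k s w = [] ↔ w = weps))
    (hCE : ∀ w : List Bool, ∃ n : Nat, (altApply k s)^[n] w = [])
    (hOC : OC k (altApply k s)) :
    ∀ n : Nat, 0 < n → ∃ w : List Bool,
      (altApply k s)^[n] w = [] ∧ ∀ m < n, (altApply k s)^[m] w ≠ [] :=
  every_vanishing_order_attained_general k s hCE hOC
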